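/- arXiv:2605.25698 — 3 statements merged into one kernel-verified Lean document; each statement's English description precedes it below -/
import Mathlib

section
/- Let β > 1 and s > 0. Then there exist constants c₁, c₂ > 0 and t₀ > 0 such that for all t ≥ t₀, c₁·t^{−s} ≤ Σ_{j=1}^∞ j^{−(1+sβ)} e^{−2 j^{−β} t} ≤ c₂·t^{−s}. -/
/-!
Put `p = 1 + sβ` and `T = t^{1/β}`, so that the `j`-th term is `j^{-p} e^{-2 (T/j)^β}` and
`t^{-s} = T^{1-p}`. For `j ≥ T` the exponential factor lies in `[e^{-2}, 1]`, so the roughly `T`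
terms with `T ≤ j ≤ 4T` already give `≳ T · T^{-p}`, while the tail `j > ⌈T⌉` is at most
`∑_{j > T} j^{-p} ≲ T^{1-p}` by telescoping `j^{-p} ≤ ((j-1)^{1-p} - j^{1-p}) / (p-1)`. The
first `⌈T⌉ ≤ 2T` terms are each `≲ T^{-p}`, because `v^q e^{-v} ≤ q^q` for `v = 2 (T/j)^β`,
`q = p/β`.
-/

open Real Finset

theorem rpow_mul_exp_neg_le_rpow_self {q v : ℝ} (hq : 0 < q) (hv : 0 ≤ v) :
    v ^ q * exp (-v) ≤ q ^ q := by
  have hlin : v ≤ q * exp (v / q) := by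
    have := add_one_le_exp (v / q)
    rw [← div_le_iff₀' hq]
    linarith [div_nonneg hv hq.le]
  have hpow : v ^ q ≤ q ^ q * exp v :=
    calc v ^ q ≤ (q * exp (v / q)) ^ q := rpow_le_rpow hv hlin hq.le
      _ = q ^ q * exp v := by
        rw [mul_rpow hq.le (exp_pos _).le, ← exp_mul, div_mul_cancel₀ v hq.ne']
  rwa [exp_neg, ← div_eq_mul_inv, div_le_iff₀ (exp_pos v)]

theorem one_add_mul_one_sub_le_rpow_neg {a u : ℝ} (ha : 0 ≤ a) (hu : 0 < u) :
    1 + a * (1 - u) ≤ u ^ (-a) := by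
  have hlog : log u ≤ u - 1 := log_le_sub_one_of_pos hu
  rw [rpow_def_of_pos hu]
  nlinarith [add_one_le_exp (log u * -a)]

theorem mul_rpow_neg_one_add_le_sub {a y : ℝ} (ha : 0 ≤ a) (hy : 0 < y) :
    a * (y + 1) ^ (-(1 + a)) ≤ y ^ (-a) - (y + 1) ^ (-a) := by
  have hy1 : 0 < y + 1 := by linarith
  have hbern : 1 + a / (y + 1) ≤ (y / (y + 1)) ^ (-a) := by
    have := one_add_mul_one_sub_le_rpow_neg ha (div_pos hy hy1)
    rwa [one_sub_div hy1.ne', add_sub_cancel_left, mul_one_div] at this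
  have := rpow_pos_of_pos hy1 (-a)
  calc a * (y + 1) ^ (-(1 + a)) = (1 + a / (y + 1)) * (y + 1) ^ (-a) - (y + 1) ^ (-a) := by
        rw [neg_add, rpow_add hy1, rpow_neg_one]
        ring
    _ ≤ (y / (y + 1)) ^ (-a) * (y + 1) ^ (-a) - (y + 1) ^ (-a) := by gcongr
    _ = y ^ (-a) - (y + 1) ^ (-a) := by
        rw [← mul_rpow (div_pos hy hy1).le hy1.le, div_mul_cancel₀ y hy1.ne']

theorem sum_range_rpow_neg_one_add_le {a y : ℝ} (ha : 0 < a) (hy : 0 < y) (n : ℕ) :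
    ∑ i ∈ range n, (y + 1 + i) ^ (-(1 + a)) ≤ y ^ (-a) / a := by
  have hstep (i : ℕ) :
      (y + 1 + i) ^ (-(1 + a)) ≤ ((y + i) ^ (-a) - (y + (i + 1 : ℕ)) ^ (-a)) / a := by
    rw [le_div_iff₀' ha, Nat.cast_succ, ← add_assoc, add_right_comm y 1]
    exact mul_rpow_neg_one_add_le_sub ha.le (by positivity)
  calc ∑ i ∈ range n, (y + 1 + i) ^ (-(1 + a))
      ≤ ∑ i ∈ range n, ((y + i) ^ (-a) - (y + (i + 1 : ℕ)) ^ (-a)) / a :=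
        sum_le_sum fun i _ => hstep i
    _ = (y ^ (-a) - (y + n) ^ (-a)) / a := by
        rw [← sum_div, sum_range_sub' (fun i : ℕ => (y + i) ^ (-a))]
        simp
    _ ≤ y ^ (-a) / a := by
        have : 0 ≤ (y + n) ^ (-a) := by positivity
        gcongr
        linarith

noncomputable def biasTerm (β p t x : ℝ) : ℝ := x ^ (-p) * exp (-2 * x ^ (-β) * t)

theorem biasTerm_nonneg (β p : ℝ) {t x : ℝ} (hx : 0 ≤ x) : 0 ≤ biasTerm β p t x := by
  unfold biasTerm; positivity

theorem biasTerm_le_rpow_neg (β p : ℝ) {t x : ℝ} (ht : 0 ≤ t) (hx : 0 ≤ x) :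
    biasTerm β p t x ≤ x ^ (-p) := by
  refine mul_le_of_le_one_right (by positivity) (exp_le_one_iff.mpr ?_)
  have : 0 ≤ x ^ (-β) * t := by positivity
  linarith

theorem biasTerm_le {β p t x : ℝ} (hβ : 0 < β) (hp : 0 < p) (ht : 0 < t) (hx : 0 < x) :
    biasTerm β p t x ≤ (p / β) ^ (p / β) * (2 * t) ^ (-(p / β)) := by
  set q := p / β
  have hvq : (2 * t * x ^ (-β)) ^ q = (2 * t) ^ q * x ^ (-p) := by
    rw [mul_rpow (by positivity) (by positivity), ← rpow_mul hx.le, neg_mul,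
      mul_div_cancel₀ p hβ.ne']
  calc biasTerm β p t x
      = (2 * t) ^ (-q) * ((2 * t * x ^ (-β)) ^ q * exp (-(2 * t * x ^ (-β)))) := by
        rw [hvq, mul_assoc, rpow_neg (by positivity), inv_mul_cancel_left₀ (by positivity),
          biasTerm]
        ring_nf
    _ ≤ (2 * t) ^ (-q) * q ^ q := by
        gcongr
        exact rpow_mul_exp_neg_le_rpow_self (div_pos hp hβ) (by positivity)
    _ = q ^ q * (2 * t) ^ (-q) := mul_comm _ _

theorem exp_neg_two_mul_rpow_le_biasTerm {β p t x : ℝ} (hx : 0 < x)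
    (htx : t ≤ x ^ β) : exp (-2) * x ^ (-p) ≤ biasTerm β p t x := by
  have hxβ : x ^ (-β) * t ≤ 1 := by
    rw [rpow_neg hx.le, inv_mul_le_one₀ (rpow_pos_of_pos hx β)]
    exact htx
  rw [biasTerm, mul_comm]
  gcongr
  linarith

theorem summable_biasTerm (β : ℝ) {p t : ℝ} (hp : 1 < p) (ht : 0 ≤ t) :
    Summable fun n : ℕ => biasTerm β p t (n + 1) := by
  have hrpow : Summable fun n : ℕ => ((n + 1 : ℕ) : ℝ) ^ (-p) :=
    (summable_nat_add_iff 1).mpr (summable_nat_rpow.mpr (by linarith))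
  push_cast at hrpow
  exact hrpow.of_nonneg_of_le (fun n => biasTerm_nonneg β p (by positivity))
    fun n => biasTerm_le_rpow_neg β p ht (by positivity)

theorem tsum_biasTerm_nat_add_le {β p t : ℝ} (hp : 1 < p) (ht : 0 ≤ t) {N : ℕ}
    (hN : (0 : ℝ) < N) :
    ∑' i : ℕ, biasTerm β p t ((i + N : ℕ) + 1) ≤ (N : ℝ) ^ (1 - p) / (p - 1) := by
  refine tsum_le_of_sum_range_le (fun n => biasTerm_nonneg β p (by positivity)) fun n => ?_
  calc ∑ i ∈ range n, biasTerm β p t ((i + N : ℕ) + 1)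
      ≤ ∑ i ∈ range n, ((N : ℝ) + 1 + i) ^ (-(1 + (p - 1))) := by
        refine sum_le_sum fun i _ => ?_
        rw [add_sub_cancel, show (N : ℝ) + 1 + i = ((i + N : ℕ) : ℝ) + 1 by push_cast; ring]
        exact biasTerm_le_rpow_neg β p ht (by positivity)
    _ ≤ (N : ℝ) ^ (-(p - 1)) / (p - 1) := sum_range_rpow_neg_one_add_le (by linarith) hN n
    _ = (N : ℝ) ^ (1 - p) / (p - 1) := by rw [neg_sub]

theorem biasSum_lower {β p T : ℝ} (hβ : 0 ≤ β) (hp : 1 < p) (hT : 1 ≤ T) :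
    exp (-2) * 4 ^ (-p) * T ^ (1 - p) ≤ ∑' n : ℕ, biasTerm β p (T ^ β) (n + 1) := by
  have hT0 : 0 < T := zero_lt_one.trans_le hT
  set N := ⌈T⌉₊
  have hTN : T ≤ N := Nat.le_ceil T
  have hNT : (N : ℝ) ≤ 2 * T := Nat.ceil_le_two_mul (by linarith)
  have hterm : ∀ i ∈ Ico N (2 * N),
      exp (-2) * (4 * T) ^ (-p) ≤ biasTerm β p (T ^ β) (i + 1) := by
    intro i hi
    have hNi : (N : ℝ) ≤ i := by exact_mod_cast (mem_Ico.mp hi).1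
    have hiN : (i : ℝ) + 1 ≤ 2 * N := by exact_mod_cast (mem_Ico.mp hi).2
    have hTi : T ≤ i + 1 := by linarith
    calc exp (-2) * (4 * T) ^ (-p) ≤ exp (-2) * ((i : ℝ) + 1) ^ (-p) :=
          mul_le_mul_of_nonneg_left
            (rpow_le_rpow_of_nonpos (by positivity) (by linarith) (by linarith)) (exp_pos _).le
      _ ≤ biasTerm β p (T ^ β) (i + 1) :=
          exp_neg_two_mul_rpow_le_biasTerm (by positivity) (rpow_le_rpow hT0.le hTi hβ)
  have hblock := card_nsmul_le_sum _ _ _ hterm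
  rw [Nat.card_Ico, show 2 * N - N = N by omega, nsmul_eq_mul] at hblock
  calc exp (-2) * 4 ^ (-p) * T ^ (1 - p) = T * (exp (-2) * (4 * T) ^ (-p)) := by
        rw [mul_rpow (by norm_num) hT0.le, sub_eq_add_neg, rpow_add hT0, rpow_one]
        ring
    _ ≤ N * (exp (-2) * (4 * T) ^ (-p)) := by gcongr
    _ ≤ ∑ i ∈ Ico N (2 * N), biasTerm β p (T ^ β) (i + 1) := hblock
    _ ≤ ∑' n : ℕ, biasTerm β p (T ^ β) (n + 1) :=
        (summable_biasTerm β hp (by positivity)).sum_le_tsum _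
          fun n _ => biasTerm_nonneg β p (by positivity)

theorem biasSum_upper {β p T : ℝ} (hβ : 0 < β) (hp : 1 < p) (hT : 1 ≤ T) :
    ∑' n : ℕ, biasTerm β p (T ^ β) (n + 1)
      ≤ (2 * (p / β) ^ (p / β) + (p - 1)⁻¹) * T ^ (1 - p) := by
  have hT0 : 0 < T := zero_lt_one.trans_le hT
  have hTp : T ^ (1 - p) = T * T ^ (-p) := by rw [sub_eq_add_neg, rpow_add hT0, rpow_one]
  set N := ⌈T⌉₊
  have hTN : T ≤ N := Nat.le_ceil T
  have hNT : (N : ℝ) ≤ 2 * T := Nat.ceil_le_two_mul (by linarith)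
  set C := (p / β) ^ (p / β)
  have hC : 0 ≤ C := by positivity
  have hterm : ∀ x : ℝ, 0 < x → biasTerm β p (T ^ β) x ≤ C * T ^ (-p) := by
    intro x hx
    refine (biasTerm_le hβ (by linarith) (by positivity) hx).trans
      (mul_le_mul_of_nonneg_left ?_ hC)
    calc (2 * T ^ β) ^ (-(p / β)) ≤ (T ^ β) ^ (-(p / β)) :=
          rpow_le_rpow_of_nonpos (by positivity) (by linarith [rpow_pos_of_pos hT0 β])
            (neg_nonpos.mpr (div_pos (by linarith) hβ).le)
      _ = T ^ (-p) := by rw [← rpow_mul hT0.le, mul_neg, mul_div_cancel₀ p hβ.ne']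
  have hhead : ∑ i ∈ range N, biasTerm β p (T ^ β) (i + 1) ≤ 2 * C * T ^ (1 - p) := by
    calc ∑ i ∈ range N, biasTerm β p (T ^ β) (i + 1) ≤ N * (C * T ^ (-p)) := by
          simpa using sum_le_card_nsmul (range N) _ _ fun i _ => hterm (i + 1) (by positivity)
      _ ≤ 2 * T * (C * T ^ (-p)) := by gcongr
      _ = 2 * C * T ^ (1 - p) := by rw [hTp]; ring
  have htail :
      ∑' i : ℕ, biasTerm β p (T ^ β) ((i + N : ℕ) + 1) ≤ (p - 1)⁻¹ * T ^ (1 - p) := by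
    refine (tsum_biasTerm_nat_add_le hp (by positivity) (hT0.trans_le hTN)).trans ?_
    rw [div_eq_inv_mul]
    exact mul_le_mul_of_nonneg_left (rpow_le_rpow_of_nonpos hT0 hTN (by linarith))
      (inv_pos.mpr (sub_pos.mpr hp)).le
  rw [← (summable_biasTerm β hp (by positivity)).sum_add_tsum_nat_add N, add_mul]
  exact add_le_add hhead (by exact_mod_cast htail)

/-- Bias-term asymptotic: for `β > 1` and `s > 0`, the sum
`Σ_{j≥1} j^{-(1+sβ)} e^{-2 j^{-β} t}` is of exact order `t^{-s}` for large `t`. -/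
theorem stmt_10 (β s : ℝ) (hβ : 1 < β) (hs : 0 < s) :
    ∃ c₁ c₂ t₀ : ℝ, 0 < c₁ ∧ 0 < c₂ ∧ 0 < t₀ ∧ ∀ t : ℝ, t₀ ≤ t →
      c₁ * t ^ (-s)
        ≤ ∑' j : ℕ+, ((j : ℝ) ^ (-(1 + s * β)) * Real.exp (-2 * (j : ℝ) ^ (-β) * t)) ∧
      (∑' j : ℕ+, ((j : ℝ) ^ (-(1 + s * β)) * Real.exp (-2 * (j : ℝ) ^ (-β) * t)))
        ≤ c₂ * t ^ (-s) := by
  have hβ0 : 0 < β := zero_lt_one.trans hβ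
  set p := 1 + s * β with hp_def
  have hp : 1 < p := by nlinarith
  have hc₂ : 0 < 2 * (p / β) ^ (p / β) + (p - 1)⁻¹ := by
    have := inv_pos.mpr (sub_pos.mpr hp)
    positivity
  refine ⟨exp (-2) * 4 ^ (-p), _, 1, by positivity, hc₂, one_pos, fun t ht => ?_⟩
  have ht0 : 0 ≤ t := zero_le_one.trans ht
  set T := t ^ β⁻¹
  have hT : 1 ≤ T := one_le_rpow ht (inv_nonneg.mpr hβ0.le)
  have hTt : T ^ β = t := rpow_inv_rpow ht0 hβ0.ne'
  have hTs : T ^ (1 - p) = t ^ (-s) := by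
    rw [← rpow_mul ht0, hp_def]
    congr 1
    field_simp
    ring
  have hsum : ∑' j : ℕ+, ((j : ℝ) ^ (-p) * exp (-2 * (j : ℝ) ^ (-β) * t))
      = ∑' n : ℕ, biasTerm β p (T ^ β) (n + 1) := by
    rw [hTt]
    refine (tsum_pnat_eq_tsum_succ (f := fun j : ℕ => biasTerm β p t j)).trans ?_
    push_cast
    rfl
  rw [hsum, ← hTs]
  exact ⟨biasSum_lower hβ0.le hp hT, biasSum_upper hβ0 hp hT⟩
end

section
/- Let β > 1. Then there exist constants c₁, c₂ > 0 and t₀ > 0 such that for all t ≥ t₀, c₁·t^{−(2−1/β)} ≤ Σ_{j=1}^∞ j^{−2β} e^{−2 j^{−β} t} ≤ c₂·t^{−(2−1/β)}. -/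
/-!
Put `T = t ^ (1/β)`, the index at which `j ^ (-β) * t = 1`. The terms with `j ≲ T` are each at
most `t⁻²`, because `u ^ 2 * exp (-2 * u) ≤ 1`, and those with `T < j ≤ 2T` are each at least a
constant times `t⁻²`; the terms with `j > T` are at most `j ^ (-2β)`, whose tail sum is
`≲ T ^ (1 - 2β) = T * t⁻²`. Both bounds are therefore of order `T * t⁻² = t ^ (-(2 - 1/β))`.
-/

open Real Finset

lemma rpow_neg_two_mul_eq_sq {x : ℝ} (hx : 0 ≤ x) (β : ℝ) : x ^ (-(2 * β)) = (x ^ (-β)) ^ 2 := by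
  rw [← rpow_mul_natCast hx]
  ring_nf

lemma rpow_inv_rpow_neg_two_mul {t β : ℝ} (ht : 0 ≤ t) (hβ : β ≠ 0) :
    (t ^ β⁻¹) ^ (-(2 * β)) = (t ^ 2)⁻¹ := by
  rw [rpow_neg_two_mul_eq_sq (by positivity), rpow_neg (by positivity), rpow_inv_rpow ht hβ,
    inv_pow]

lemma rpow_neg_two_sub_one_div {t : ℝ} (ht : 0 < t) (β : ℝ) :
    t ^ (-(2 - 1 / β)) = t ^ β⁻¹ * (t ^ 2)⁻¹ := by
  rw [show -(2 - 1 / β) = β⁻¹ + -(2 : ℕ) by push_cast; ring, rpow_add ht, rpow_neg ht.le,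
    rpow_natCast]

lemma sq_mul_exp_neg_two_mul_le_one {u : ℝ} (hu : 0 ≤ u) : u ^ 2 * exp (-2 * u) ≤ 1 := by
  have h := pow_div_factorial_le_exp (2 * u) (by positivity) 2
  rw [show -2 * u = -(2 * u) by ring, exp_neg, ← div_eq_mul_inv, div_le_one (exp_pos _)]
  norm_num [Nat.factorial] at h
  nlinarith

lemma sum_Ioo_rpow_neg_le {p : ℝ} (hp : 2 ≤ p) {k : ℕ} (hk : 0 < k) (n : ℕ) :
    ∑ i ∈ Ioo k n, (i : ℝ) ^ (-p) ≤ 2 * (k : ℝ) ^ (1 - p) := by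
  have hk' : (0 : ℝ) < k := by exact_mod_cast hk
  calc ∑ i ∈ Ioo k n, (i : ℝ) ^ (-p)
      ≤ ∑ i ∈ Ioo k n, (k : ℝ) ^ (2 - p) * ((i : ℝ) ^ 2)⁻¹ := by
        refine sum_le_sum fun i hi => ?_
        have hki : (k : ℝ) ≤ i := by exact_mod_cast (mem_Ioo.mp hi).1.le
        have hi0 : (0 : ℝ) < i := hk'.trans_le hki
        rw [show -p = (2 - p) + -(2 : ℕ) by push_cast; ring, rpow_add hi0, rpow_neg hi0.le,
          rpow_natCast]
        exact mul_le_mul_of_nonneg_right (rpow_le_rpow_of_nonpos hk' hki (by linarith))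
          (by positivity)
    _ ≤ (k : ℝ) ^ (2 - p) * (2 / (k + 1)) := by
        rw [← mul_sum]
        gcongr
        exact sum_Ioo_inv_sq_le k n
    _ ≤ (k : ℝ) ^ (2 - p) * (2 / k) := by gcongr; linarith
    _ = 2 * (k : ℝ) ^ (1 - p) := by
        rw [show (2 : ℝ) - p = (1 - p) + 1 by ring, rpow_add_one hk'.ne']
        field_simp

/-- The summand `λ_j ^ 2 * exp (-2 * λ_j * t)` of the forgetting kernel, with `λ_j = j ^ (-β)`. -/
noncomputable def kernelTerm (β t x : ℝ) : ℝ := x ^ (-(2 * β)) * exp (-2 * x ^ (-β) * t)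

noncomputable def forgettingKernel (β t : ℝ) : ℝ := ∑' j : ℕ+, kernelTerm β t j

section kernelTerm

variable {β t x : ℝ}

lemma kernelTerm_nonneg (hx : 0 ≤ x) : 0 ≤ kernelTerm β t x := by
  unfold kernelTerm; positivity

lemma kernelTerm_le_rpow (hx : 0 ≤ x) (ht : 0 ≤ t) : kernelTerm β t x ≤ x ^ (-(2 * β)) := by
  refine mul_le_of_le_one_right (by positivity) (exp_le_one_iff.mpr ?_)
  have : 0 ≤ x ^ (-β) * t := by positivity
  linarith

lemma kernelTerm_le_inv_sq (hx : 0 ≤ x) (ht : 0 < t) : kernelTerm β t x ≤ (t ^ 2)⁻¹ := by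
  rw [kernelTerm, rpow_neg_two_mul_eq_sq hx, ← one_div, le_div_iff₀ (by positivity)]
  calc _ = (x ^ (-β) * t) ^ 2 * exp (-2 * (x ^ (-β) * t)) := by
        rw [mul_assoc (-2)]; ring
    _ ≤ 1 := sq_mul_exp_neg_two_mul_le_one (by positivity)

lemma le_kernelTerm (hβ : 0 < β) (ht : 0 < t) {c : ℝ} (hc : 0 < c)
    (hlo : t ^ β⁻¹ ≤ x) (hhi : x ≤ c * t ^ β⁻¹) :
    exp (-2) * c ^ (-(2 * β)) * (t ^ 2)⁻¹ ≤ kernelTerm β t x := by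
  have hT : 0 < t ^ β⁻¹ := by positivity
  have hexp : exp (-2) ≤ exp (-2 * x ^ (-β) * t) := by
    have hx : x ^ (-β) ≤ t⁻¹ :=
      calc x ^ (-β) ≤ (t ^ β⁻¹) ^ (-β) := rpow_le_rpow_of_nonpos hT hlo (by linarith)
        _ = t⁻¹ := by rw [rpow_neg hT.le, rpow_inv_rpow ht.le hβ.ne']
    have hxt : x ^ (-β) * t ≤ 1 :=
      calc x ^ (-β) * t ≤ t⁻¹ * t := by gcongr
        _ = 1 := inv_mul_cancel₀ ht.ne'
    gcongr
    linarith
  have hpow : c ^ (-(2 * β)) * (t ^ 2)⁻¹ ≤ x ^ (-(2 * β)) :=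
    calc c ^ (-(2 * β)) * (t ^ 2)⁻¹ = (c * t ^ β⁻¹) ^ (-(2 * β)) := by
          rw [mul_rpow hc.le hT.le, rpow_inv_rpow_neg_two_mul ht.le hβ.ne']
      _ ≤ x ^ (-(2 * β)) := rpow_le_rpow_of_nonpos (hT.trans_le hlo) hhi (by linarith)
  rw [mul_assoc, kernelTerm, mul_comm (x ^ _)]
  exact mul_le_mul hexp hpow (by positivity) (exp_pos _).le

lemma kernelTerm_zero (hβ : β ≠ 0) : kernelTerm β t 0 = 0 := by
  simp [kernelTerm, zero_rpow (neg_ne_zero.mpr (mul_ne_zero two_ne_zero hβ))]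

lemma summable_kernelTerm (hβ : 1 / 2 < β) (ht : 0 ≤ t) :
    Summable fun j : ℕ => kernelTerm β t j :=
  (summable_nat_rpow.mpr (by linarith)).of_nonneg_of_le (fun j => kernelTerm_nonneg j.cast_nonneg)
    fun j => kernelTerm_le_rpow j.cast_nonneg ht

lemma sum_range_kernelTerm_le (hβ : 1 ≤ β) (ht : 0 < t) {N : ℕ} (hN : 0 < N) (M : ℕ) :
    ∑ j ∈ range M, kernelTerm β t j ≤ (N + 1) * (t ^ 2)⁻¹ + 2 * (N : ℝ) ^ (1 - 2 * β) := by
  rw [← sum_filter_add_sum_filter_not (range M) (· ≤ N)]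
  gcongr
  · calc ∑ j ∈ (range M).filter (· ≤ N), kernelTerm β t j
        ≤ ∑ j ∈ range (N + 1), kernelTerm β t j :=
          sum_le_sum_of_subset_of_nonneg (by intro j; simp only [mem_filter, mem_range]; omega)
            fun j _ _ => kernelTerm_nonneg j.cast_nonneg
      _ ≤ ∑ j ∈ range (N + 1), (t ^ 2)⁻¹ :=
          sum_le_sum fun j _ => kernelTerm_le_inv_sq j.cast_nonneg ht
      _ = (N + 1) * (t ^ 2)⁻¹ := by simp
  · have hfilter : (range M).filter (¬ · ≤ N) = Ioo N M := by
      ext j; simp only [mem_filter, mem_range, mem_Ioo]; omega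
    rw [hfilter]
    calc ∑ j ∈ Ioo N M, kernelTerm β t j ≤ ∑ j ∈ Ioo N M, (j : ℝ) ^ (-(2 * β)) :=
          sum_le_sum fun j _ => kernelTerm_le_rpow j.cast_nonneg ht.le
      _ ≤ 2 * (N : ℝ) ^ (1 - 2 * β) := sum_Ioo_rpow_neg_le (by linarith) hN M

lemma forgettingKernel_eq_tsum_nat (hβ : β ≠ 0) :
    forgettingKernel β t = ∑' j : ℕ, kernelTerm β t j :=
  tsum_pnat_eq_tsum_of_eq_zero (f := fun j : ℕ => kernelTerm β t j)
    (by simpa using kernelTerm_zero hβ)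

theorem le_forgettingKernel (hβ : 1 / 2 < β) (ht : 1 ≤ t) :
    exp (-2) * 4 ^ (-(2 * β)) * t ^ (-(2 - 1 / β)) ≤ forgettingKernel β t := by
  have ht0 : 0 < t := by linarith
  have hβ0 : 0 < β := by linarith
  set T := t ^ β⁻¹
  have hT : 1 ≤ T := one_le_rpow ht (by positivity)
  set N := ⌈T⌉₊
  have hTN : T ≤ N := Nat.le_ceil T
  have hNT : (N : ℝ) < T + 1 := Nat.ceil_lt_add_one (by positivity)
  have hterm : ∀ j ∈ Ioc N (2 * N), exp (-2) * 4 ^ (-(2 * β)) * (t ^ 2)⁻¹ ≤ kernelTerm β t j := by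
    intro j hj
    have hNj : (N : ℝ) ≤ j := by exact_mod_cast (mem_Ioc.mp hj).1.le
    have hjN : (j : ℝ) ≤ 2 * N := by exact_mod_cast (mem_Ioc.mp hj).2
    exact le_kernelTerm hβ0 ht0 (by norm_num) (by linarith) (by linarith)
  calc exp (-2) * 4 ^ (-(2 * β)) * t ^ (-(2 - 1 / β))
      = T * (exp (-2) * 4 ^ (-(2 * β)) * (t ^ 2)⁻¹) := by rw [rpow_neg_two_sub_one_div ht0]; ring
    _ ≤ N * (exp (-2) * 4 ^ (-(2 * β)) * (t ^ 2)⁻¹) := by gcongr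
    _ ≤ ∑ j ∈ Ioc N (2 * N), kernelTerm β t j := by
        simpa [Nat.card_Ioc, two_mul] using card_nsmul_le_sum _ _ _ hterm
    _ ≤ ∑' j : ℕ, kernelTerm β t j :=
        (summable_kernelTerm hβ ht0.le).sum_le_tsum _ fun j _ => kernelTerm_nonneg j.cast_nonneg
    _ = forgettingKernel β t := (forgettingKernel_eq_tsum_nat hβ0.ne').symm

theorem forgettingKernel_le (hβ : 1 ≤ β) (ht : 1 ≤ t) :
    forgettingKernel β t ≤ 5 * t ^ (-(2 - 1 / β)) := by
  have ht0 : 0 < t := by linarith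
  have hβ0 : 0 < β := by linarith
  set T := t ^ β⁻¹
  have hT : 1 ≤ T := one_le_rpow ht (by positivity)
  set N := ⌈T⌉₊
  have hTN : T ≤ N := Nat.le_ceil T
  have hNT : (N : ℝ) < T + 1 := Nat.ceil_lt_add_one (by positivity)
  have hN : 0 < N := Nat.ceil_pos.mpr (by linarith)
  have htail : (N : ℝ) ^ (1 - 2 * β) ≤ T * (t ^ 2)⁻¹ :=
    calc (N : ℝ) ^ (1 - 2 * β) ≤ T ^ (1 - 2 * β) :=
          rpow_le_rpow_of_nonpos (by positivity) hTN (by linarith)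
      _ = T * (t ^ 2)⁻¹ := by
          rw [sub_eq_add_neg, rpow_add (by positivity), rpow_one,
            rpow_inv_rpow_neg_two_mul ht0.le hβ0.ne']
  rw [forgettingKernel_eq_tsum_nat hβ0.ne', rpow_neg_two_sub_one_div ht0]
  refine Real.tsum_le_of_sum_range_le (fun j => kernelTerm_nonneg j.cast_nonneg) fun M => ?_
  calc _ ≤ (N + 1) * (t ^ 2)⁻¹ + 2 * (N : ℝ) ^ (1 - 2 * β) := sum_range_kernelTerm_le hβ ht0 hN M
    _ ≤ 3 * T * (t ^ 2)⁻¹ + 2 * (T * (t ^ 2)⁻¹) := by gcongr; linarith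
    _ = 5 * (T * (t ^ 2)⁻¹) := by ring

end kernelTerm

/-- Kernel asymptotic: for `β > 1`, the sum `Σ_{j≥1} j^{-2β} e^{-2 j^{-β} t}`
is of exact order `t^{-(2-1/β)}` for large `t`. -/
theorem stmt_11 (β : ℝ) (hβ : 1 < β) :
    ∃ c₁ c₂ t₀ : ℝ, 0 < c₁ ∧ 0 < c₂ ∧ 0 < t₀ ∧ ∀ t : ℝ, t₀ ≤ t →
      c₁ * t ^ (-(2 - 1 / β))
        ≤ ∑' j : ℕ+, ((j : ℝ) ^ (-(2 * β)) * Real.exp (-2 * (j : ℝ) ^ (-β) * t)) ∧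
      (∑' j : ℕ+, ((j : ℝ) ^ (-(2 * β)) * Real.exp (-2 * (j : ℝ) ^ (-β) * t)))
        ≤ c₂ * t ^ (-(2 - 1 / β)) := by
  refine ⟨exp (-2) * 4 ^ (-(2 * β)), 5, 1, by positivity, by norm_num, one_pos, fun t ht => ?_⟩
  exact ⟨le_forgettingKernel (by linarith) ht, forgettingKernel_le hβ.le ht⟩
end

section
/- Let 0 < a₀ < a₁, 0 < c₁ < c₀, and B > 0. For i ∈ {0,1}, define Φ_i(w) = min over b ≥ B of (c_i·w/b + a_i·b) for w > 0. Then the ratio R(w) = Φ₁(w)/Φ₀(w) is nonincreasing on (0,∞); moreover R(w) → a₁/a₀ > 1 as w → 0⁺ and R(w) → √(a₁c₁/(a₀c₀)) as w → ∞, and R is constant equal to √(a₁c₁/(a₀c₀)) on [a₁B²/c₁, ∞). -/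
/-!
The cost `Φ(w) = inf_{b ≥ B} (c w / b + a b)` equals `c w / B + a B` while the unconstrained
minimiser `√(c w / a)` lies below `B`, and `2 √(a c w)` afterwards. Rescaling an admissible `b`
by `√(w' / w) ≥ 1` shows that `Φ(w) / √w` is antitone. For `w ≥ a₀ B² / c₀` the low-quality cost
is unconstrained, so `R = Φ₁ / Φ₀` is a constant multiple of `Φ₁(w) / √w`; below that threshold
both costs are constrained and `R` is a linear fractional function, decreasing because
`a₀ c₁ ≤ a₁ c₀`. Both limits come from the closed forms.
-/

open Set Filter Topology

noncomputable def endpointCost (a c B w : ℝ) : ℝ :=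
  sInf {y : ℝ | ∃ b : ℝ, B ≤ b ∧ y = c * w / b + a * b}

section EndpointCost

variable {a c B : ℝ}

theorem endpointCost_eq_of_le {w : ℝ} (ha : 0 ≤ a) (hB : 0 < B) (h : c * w ≤ a * B ^ 2) :
    endpointCost a c B w = c * w / B + a * B := by
  refine IsLeast.csInf_eq ⟨⟨B, le_rfl, rfl⟩, ?_⟩
  rintro _ ⟨b, hb, rfl⟩
  have hb₀ : 0 < b := hB.trans_le hb
  have hgap :
      c * w / b + a * b - (c * w / B + a * B) = (b - B) * (a * b * B - c * w) / (b * B) := by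
    field_simp
    ring
  have hslope : c * w ≤ a * b * B := by
    nlinarith [mul_nonneg (mul_nonneg ha hB.le) (sub_nonneg.2 hb)]
  have : 0 ≤ (b - B) * (a * b * B - c * w) / (b * B) :=
    div_nonneg (mul_nonneg (sub_nonneg.2 hb) (sub_nonneg.2 hslope)) (by positivity)
  linarith

theorem endpointCost_eq_of_ge {w : ℝ} (ha : 0 < a) (hB : 0 < B) (h : a * B ^ 2 ≤ c * w) :
    endpointCost a c B w = 2 * √(a * c * w) := by
  have hcw : 0 < c * w := lt_of_lt_of_le (by positivity) h
  set b₀ := √(c * w / a)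
  have hb₀ : 0 < b₀ := Real.sqrt_pos.2 (div_pos hcw ha)
  have hcw_eq : c * w = a * b₀ ^ 2 := by
    rw [Real.sq_sqrt (div_pos hcw ha).le]
    field_simp
  have hsqrt : √(a * c * w) = a * b₀ := by
    rw [Real.sqrt_eq_iff_eq_sq (by nlinarith) (by positivity), mul_assoc, hcw_eq]
    ring
  refine IsLeast.csInf_eq ⟨⟨b₀, ?_, ?_⟩, ?_⟩
  · exact (Real.le_sqrt hB.le (div_pos hcw ha).le).2 ((le_div_iff₀ ha).2 (by linarith))
  · rw [hsqrt, hcw_eq]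
    field_simp
    ring
  · rintro _ ⟨b, hb, rfl⟩
    have hb_pos : 0 < b := hB.trans_le hb
    have hprod : c * w / b * (a * b) = a * c * w := by field_simp
    have : √(a * c * w) ≤ (c * w / b + a * b) / 2 :=
      Real.sqrt_le_iff.2 ⟨by positivity, by nlinarith [sq_nonneg (c * w / b - a * b)]⟩
    linarith

theorem endpointCost_le_sqrt_div_mul {w w' : ℝ} (ha : 0 ≤ a) (hc : 0 ≤ c) (hB : 0 < B)
    (hw : 0 < w) (hww' : w ≤ w') :
    endpointCost a c B w' ≤ √(w' / w) * endpointCost a c B w := by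
  have hw' : 0 < w' := hw.trans_le hww'
  set k := √(w' / w)
  have hk : 1 ≤ k := Real.one_le_sqrt.2 ((one_le_div hw).2 hww')
  have hk_sq : k ^ 2 = w' / w := Real.sq_sqrt (div_pos hw' hw).le
  have hbdd : BddBelow {y : ℝ | ∃ b : ℝ, B ≤ b ∧ y = c * w' / b + a * b} := by
    refine ⟨0, ?_⟩
    rintro _ ⟨b, hb, rfl⟩
    have : 0 < b := hB.trans_le hb
    positivity
  rw [← div_le_iff₀' (by positivity)]
  refine le_csInf ⟨_, B, le_rfl, rfl⟩ ?_
  rintro _ ⟨b, hb, rfl⟩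
  have hb₀ : 0 < b := hB.trans_le hb
  rw [div_le_iff₀' (by positivity)]
  calc endpointCost a c B w' ≤ c * w' / (k * b) + a * (k * b) :=
        csInf_le hbdd ⟨k * b, hb.trans (le_mul_of_one_le_left hb₀.le hk), rfl⟩
    _ = k * (c * w / b + a * b) := by
        rw [show w' = k ^ 2 * w by rw [hk_sq]; field_simp]
        field_simp

theorem antitoneOn_endpointCost_div_sqrt (ha : 0 ≤ a) (hc : 0 ≤ c) (hB : 0 < B) :
    AntitoneOn (fun w => endpointCost a c B w / √w) (Ioi 0) := by
  intro w hw w' hw' hww'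
  have hsw : 0 < √w := Real.sqrt_pos.2 hw
  calc endpointCost a c B w' / √w' ≤ √(w' / w) * endpointCost a c B w / √w' := by
        gcongr
        exact endpointCost_le_sqrt_div_mul ha hc hB hw hww'
    _ = endpointCost a c B w / √w := by
        rw [Real.sqrt_div' _ hw.le]
        field_simp [(Real.sqrt_pos.2 hw').ne']

end EndpointCost

noncomputable def costRatio (a₀ a₁ c₀ c₁ B w : ℝ) : ℝ :=
  endpointCost a₁ c₁ B w / endpointCost a₀ c₀ B w

section CostRatio

variable {a₀ a₁ c₀ c₁ B : ℝ}

theorem costRatio_eq_of_le {w : ℝ} (ha₀ : 0 ≤ a₀) (ha : a₀ ≤ a₁) (hc : c₁ ≤ c₀) (hB : 0 < B)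
    (hw : 0 ≤ w) (h : c₀ * w ≤ a₀ * B ^ 2) :
    costRatio a₀ a₁ c₀ c₁ B w = (c₁ * w / B + a₁ * B) / (c₀ * w / B + a₀ * B) := by
  have h₁ : c₁ * w ≤ a₁ * B ^ 2 := by nlinarith
  rw [costRatio, endpointCost_eq_of_le (ha₀.trans ha) hB h₁, endpointCost_eq_of_le ha₀ hB h]

theorem costRatio_eq_of_ge {w : ℝ} (ha₀ : 0 < a₀) (ha : a₀ ≤ a₁) (hc₁ : 0 < c₁) (hc : c₁ ≤ c₀)
    (hB : 0 < B) (h : a₁ * B ^ 2 / c₁ ≤ w) :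
    costRatio a₀ a₁ c₀ c₁ B w = √(a₁ * c₁ / (a₀ * c₀)) := by
  have ha₁ : 0 < a₁ := ha₀.trans_le ha
  have hc₀ : 0 < c₀ := hc₁.trans_le hc
  have h₁ : a₁ * B ^ 2 ≤ c₁ * w := by rwa [div_le_iff₀' hc₁] at h
  have hw : 0 < w := lt_of_lt_of_le (by positivity) h
  have h₀ : a₀ * B ^ 2 ≤ c₀ * w := by nlinarith
  rw [costRatio, endpointCost_eq_of_ge ha₁ hB h₁, endpointCost_eq_of_ge ha₀ hB h₀,
    mul_div_mul_left _ _ two_ne_zero, ← Real.sqrt_div' _ (by positivity : 0 ≤ a₀ * c₀ * w),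
    mul_div_mul_right _ _ hw.ne']

theorem antitoneOn_costRatio (ha₀ : 0 < a₀) (ha : a₀ ≤ a₁) (hc₁ : 0 < c₁) (hc : c₁ ≤ c₀)
    (hB : 0 < B) : AntitoneOn (costRatio a₀ a₁ c₀ c₁ B) (Ioi 0) := by
  have hc₀ : 0 < c₀ := hc₁.trans_le hc
  set u := a₀ * B ^ 2 / c₀
  have hu : 0 < u := by positivity
  have hconstrained : AntitoneOn (costRatio a₀ a₁ c₀ c₁ B) (Ioc 0 u) := by
    rintro w ⟨hw₀, hwu⟩ w' ⟨hw₀', hwu'⟩ hww'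
    rw [costRatio_eq_of_le ha₀.le ha hc hB hw₀.le ((le_div_iff₀' hc₀).1 hwu),
      costRatio_eq_of_le ha₀.le ha hc hB hw₀'.le ((le_div_iff₀' hc₀).1 hwu'),
      div_le_div_iff₀ (by positivity) (by positivity)]
    have hcross : a₀ * c₁ ≤ a₁ * c₀ := by nlinarith
    have : 0 ≤ (w' - w) * (a₁ * c₀ - a₀ * c₁) := mul_nonneg (by linarith) (by linarith)
    field_simp
    nlinarith
  have hfree : AntitoneOn (costRatio a₀ a₁ c₀ c₁ B) (Ici u) := by
    have hΦ₁ := antitoneOn_endpointCost_div_sqrt (ha₀.trans_le ha).le hc₁.le hB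
    have hform (w : ℝ) (hw : w ∈ Ici u) : costRatio a₀ a₁ c₀ c₁ B w
        = endpointCost a₁ c₁ B w / √w / (2 * √(a₀ * c₀)) := by
      have hw₀ : 0 < w := hu.trans_le hw
      rw [costRatio, endpointCost_eq_of_ge ha₀ hB ((div_le_iff₀' hc₀).1 hw),
        Real.sqrt_mul (by positivity), div_div]
      ring
    intro w hw w' hw' hww'
    rw [hform w hw, hform w' hw']
    exact div_le_div_of_nonneg_right (hΦ₁ (hu.trans_le hw) (hu.trans_le hw') hww') (by positivity)
  rw [← Ioc_union_Ici_eq_Ioi hu]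
  exact hconstrained.union_right hfree (isGreatest_Ioc hu) isLeast_Ici

theorem tendsto_costRatio_nhdsGT_zero (ha₀ : 0 < a₀) (ha : a₀ ≤ a₁) (hc₀ : 0 < c₀) (hc : c₁ ≤ c₀)
    (hB : 0 < B) : Tendsto (costRatio a₀ a₁ c₀ c₁ B) (𝓝[>] 0) (𝓝 (a₁ / a₀)) := by
  have hfrac : Tendsto (fun w => (c₁ * w / B + a₁ * B) / (c₀ * w / B + a₀ * B)) (𝓝 0)
      (𝓝 (a₁ / a₀)) := by
    have : ContinuousAt (fun w => (c₁ * w / B + a₁ * B) / (c₀ * w / B + a₀ * B)) 0 :=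
      ContinuousAt.div (by fun_prop) (by fun_prop) (by simp [ha₀.ne', hB.ne'])
    simpa [mul_div_mul_right _ _ hB.ne'] using this.tendsto
  refine (hfrac.mono_left nhdsWithin_le_nhds).congr' ?_
  filter_upwards [Ioo_mem_nhdsGT (by positivity : (0 : ℝ) < a₀ * B ^ 2 / c₀)] with w hw
  exact (costRatio_eq_of_le ha₀.le ha hc hB hw.1.le ((lt_div_iff₀' hc₀).1 hw.2).le).symm

end CostRatio

/-- Monotonicity of the ratio of reduced endpoint costs: for `0 < a₀ < a₁`,
`0 < c₁ < c₀`, `B > 0`, with `Φᵢ(w) = min_{b ≥ B} (cᵢ w / b + aᵢ b)`, the ratio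
`R(w) = Φ₁(w)/Φ₀(w)` is nonincreasing on `(0,∞)`, tends to `a₁/a₀ > 1` as `w → 0⁺`,
tends to `√(a₁c₁/(a₀c₀))` as `w → ∞`, and is constant equal to `√(a₁c₁/(a₀c₀))`
on `[a₁B²/c₁, ∞)`. -/
theorem stmt_13 (a₀ a₁ c₀ c₁ B : ℝ) (ha₀ : 0 < a₀) (ha : a₀ < a₁)
    (hc₁ : 0 < c₁) (hc : c₁ < c₀) (hB : 0 < B) :
    AntitoneOn
      (fun w : ℝ => sInf {y : ℝ | ∃ b : ℝ, B ≤ b ∧ y = c₁ * w / b + a₁ * b}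
        / sInf {y : ℝ | ∃ b : ℝ, B ≤ b ∧ y = c₀ * w / b + a₀ * b})
      (Set.Ioi (0 : ℝ)) ∧
    Tendsto
      (fun w : ℝ => sInf {y : ℝ | ∃ b : ℝ, B ≤ b ∧ y = c₁ * w / b + a₁ * b}
        / sInf {y : ℝ | ∃ b : ℝ, B ≤ b ∧ y = c₀ * w / b + a₀ * b})
      (nhdsWithin 0 (Set.Ioi 0)) (nhds (a₁ / a₀)) ∧
    1 < a₁ / a₀ ∧
    Tendsto
      (fun w : ℝ => sInf {y : ℝ | ∃ b : ℝ, B ≤ b ∧ y = c₁ * w / b + a₁ * b}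
        / sInf {y : ℝ | ∃ b : ℝ, B ≤ b ∧ y = c₀ * w / b + a₀ * b})
      atTop (nhds (Real.sqrt (a₁ * c₁ / (a₀ * c₀)))) ∧
    ∀ w : ℝ, a₁ * B ^ 2 / c₁ ≤ w →
      sInf {y : ℝ | ∃ b : ℝ, B ≤ b ∧ y = c₁ * w / b + a₁ * b}
        / sInf {y : ℝ | ∃ b : ℝ, B ≤ b ∧ y = c₀ * w / b + a₀ * b}
        = Real.sqrt (a₁ * c₁ / (a₀ * c₀)) := by
  have hconst (w : ℝ) (hw : a₁ * B ^ 2 / c₁ ≤ w) :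
      costRatio a₀ a₁ c₀ c₁ B w = √(a₁ * c₁ / (a₀ * c₀)) :=
    costRatio_eq_of_ge ha₀ ha.le hc₁ hc.le hB hw
  refine ⟨antitoneOn_costRatio ha₀ ha.le hc₁ hc.le hB,
    tendsto_costRatio_nhdsGT_zero ha₀ ha.le (hc₁.trans hc) hc.le hB, (one_lt_div ha₀).2 ha, ?_,
    hconst⟩
  exact tendsto_const_nhds.congr' <| EventuallyEq.symm <| (eventually_ge_atTop _).mono hconst
end
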